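/- arXiv:quant-ph/0612033 — 2 statements merged into one kernel-verified Lean document; each statement's English description precedes it below -/
import Mathlib

section
/- Let N ≥ 1 be a natural number, set δt = 1/N, and let η ≥ 0 be a real number. Let ε : {0,…,N−1} → ℝ take values in {−1, 1}, let b₁, b₂, σ₁, σ₂ : {0,…,N−1} → ℝ, and let x₁, x₂ : {0,…,N} → ℝ satisfy the recursions xᵢ(k+1) = xᵢ(k) + bᵢ(k)·δt + σᵢ(k)·ε(k)·√δt for i = 1, 2 and all k < N. If |x₁(0) − x₂(0)| ≤ η, |b₁(k) − b₂(k)| ≤ η and |σ₁(k) − σ₂(k)| ≤ η for all k < N, then for every k ≤ N one has |x₁(k) − x₂(k)| ≤ η·(2 + √N). -/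
/-!
The difference `d = x₁ - x₂` of the two walks moves in each step by
`(b₁ - b₂)·δt + (σ₁ - σ₂)·ε·√δt`, of size at most `η·(δt + √δt)` because `|ε| = 1`. Summing
over at most `N` steps, with `N·δt = 1` and `N·√δt = √N`, adds at most `η·(1 + √N)` to the
initial discrepancy `|d 0| ≤ η`.
-/

open Real

lemma abs_sub_increments_le {b₁ b₂ σ₁ σ₂ e δ η : ℝ} (hδ : 0 ≤ δ) (he : |e| ≤ 1)
    (hb : |b₁ - b₂| ≤ η) (hσ : |σ₁ - σ₂| ≤ η) :
    |(b₁ * δ + σ₁ * e * √δ) - (b₂ * δ + σ₂ * e * √δ)| ≤ η * (δ + √δ) := by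
  have hη : 0 ≤ η := (abs_nonneg _).trans hb
  calc |(b₁ * δ + σ₁ * e * √δ) - (b₂ * δ + σ₂ * e * √δ)|
      = |(b₁ - b₂) * δ + (σ₁ - σ₂) * e * √δ| := by ring_nf
    _ ≤ |b₁ - b₂| * δ + |σ₁ - σ₂| * |e| * √δ := by
        refine (abs_add_le _ _).trans_eq ?_
        rw [abs_mul, abs_mul, abs_mul, abs_of_nonneg hδ, abs_of_nonneg (sqrt_nonneg δ)]
    _ ≤ η * δ + η * 1 * √δ := by gcongr
    _ = η * (δ + √δ) := by ring

lemma mul_inv_add_sqrt_inv_le {t N : ℝ} (ht : 0 ≤ t) (htN : t ≤ N) :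
    t * (1 / N + √(1 / N)) ≤ 1 + √N := by
  have hN : 0 ≤ N := ht.trans htN
  have hN_sqrt : N * √(1 / N) = √N := by
    rw [one_div, sqrt_inv, ← div_eq_mul_inv, div_sqrt]
  calc t * (1 / N + √(1 / N)) ≤ N * (1 / N + √(1 / N)) := by gcongr
    _ = N * N⁻¹ + √N := by rw [mul_add, hN_sqrt, one_div]
    _ ≤ 1 + √N := by gcongr; exact mul_inv_le_one

theorem stmt_0_general (N : ℕ) (η : ℝ)
    (ε b₁ b₂ σ₁ σ₂ : ℕ → ℝ) (x₁ x₂ : ℕ → ℝ)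
    (hε : ∀ k < N, ε k = 1 ∨ ε k = -1)
    (hx₁ : ∀ k < N,
      x₁ (k + 1) = x₁ k + b₁ k * (1 / N) + σ₁ k * ε k * Real.sqrt (1 / N))
    (hx₂ : ∀ k < N,
      x₂ (k + 1) = x₂ k + b₂ k * (1 / N) + σ₂ k * ε k * Real.sqrt (1 / N))
    (h0 : |x₁ 0 - x₂ 0| ≤ η)
    (hb : ∀ k < N, |b₁ k - b₂ k| ≤ η)
    (hσ : ∀ k < N, |σ₁ k - σ₂ k| ≤ η) :
    ∀ k ≤ N, |x₁ k - x₂ k| ≤ η * (2 + Real.sqrt N) := by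
  intro k hk
  set d : ℕ → ℝ := fun j ↦ x₁ j - x₂ j
  have hη : 0 ≤ η := (abs_nonneg _).trans h0
  have hstep : ∀ j < N, dist (d j) (d (j + 1)) ≤ η * (1 / N + √(1 / N)) := by
    intro j hj
    have he : |ε j| ≤ 1 := by rcases hε j hj with h | h <;> simp [h]
    rw [dist_comm, Real.dist_eq]
    convert abs_sub_increments_le (δ := 1 / N) (by positivity) he (hb j hj) (hσ j hj) using 2
    simp only [d, hx₁ j hj, hx₂ j hj]
    ring
  have hdrift : dist (d k) (d 0) ≤ η * (k * (1 / N + √(1 / N))) := by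
    rw [dist_comm, mul_left_comm]
    simpa using dist_le_range_sum_of_dist_le k fun {j} hj ↦ hstep j (hj.trans_le hk)
  have hsum := mul_inv_add_sqrt_inv_le (Nat.cast_nonneg k) (Nat.cast_le.mpr hk : (k : ℝ) ≤ N)
  calc |d k| ≤ |d 0| + dist (d k) (d 0) := by
        rw [Real.dist_eq]
        linarith [abs_sub_abs_le_abs_sub (d k) (d 0)]
    _ ≤ η + η * (1 + √N) :=
        add_le_add h0 (hdrift.trans (mul_le_mul_of_nonneg_left hsum hη))
    _ = η * (2 + √N) := by ring

/-- Finitary content of the paper's Lemma: two infinitesimal random walks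
`xᵢ(k+1) = xᵢ(k) + bᵢ(k)·δt + σᵢ(k)·ε(k)·√δt` (time step `δt = 1/N`) whose
drifts, diffusion coefficients and initial conditions differ by at most `η`
stay within `η·(2 + √N)` of each other on the whole time scale. -/
theorem stmt_0 (N : ℕ) (hN : 1 ≤ N) (η : ℝ) (hη : 0 ≤ η)
    (ε b₁ b₂ σ₁ σ₂ : ℕ → ℝ) (x₁ x₂ : ℕ → ℝ)
    (hε : ∀ k < N, ε k = 1 ∨ ε k = -1)
    (hx₁ : ∀ k < N,
      x₁ (k + 1) = x₁ k + b₁ k * (1 / N) + σ₁ k * ε k * Real.sqrt (1 / N))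
    (hx₂ : ∀ k < N,
      x₂ (k + 1) = x₂ k + b₂ k * (1 / N) + σ₂ k * ε k * Real.sqrt (1 / N))
    (h0 : |x₁ 0 - x₂ 0| ≤ η)
    (hb : ∀ k < N, |b₁ k - b₂ k| ≤ η)
    (hσ : ∀ k < N, |σ₁ k - σ₂ k| ≤ η) :
    ∀ k ≤ N, |x₁ k - x₂ k| ≤ η * (2 + Real.sqrt N) :=
  stmt_0_general N η ε b₁ b₂ σ₁ σ₂ x₁ x₂ hε hx₁ hx₂ h0 hb hσ
end

section
/- For each n ≥ 1 let δtₙ = 1/n, let εₙ : {0,…,n−1} → {−1,1}, let b₁ₙ, b₂ₙ, σ₁ₙ, σ₂ₙ : {0,…,n−1} → ℝ, and let x₁ₙ, x₂ₙ : {0,…,n} → ℝ satisfy xᵢₙ(k+1) = xᵢₙ(k) + bᵢₙ(k)·δtₙ + σᵢₙ(k)·εₙ(k)·√δtₙ. Let η : ℕ → ℝ≥0 be such that for every n, |x₁ₙ(0) − x₂ₙ(0)| ≤ η(n), |b₁ₙ(k) − b₂ₙ(k)| ≤ η(n) and |σ₁ₙ(k) − σ₂ₙ(k)| ≤ η(n)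 for all k < n, and let D(n) = max_{0 ≤ k ≤ n} |x₁ₙ(k) − x₂ₙ(k)|. If the hyperreal number determined by the sequence (η(n)·√n)ₙ (i.e. its germ along the hyperfilter on ℕ) is infinitesimal, then the hyperreal number determined by the sequence (D(n))ₙ is infinitesimal. -/
/-! The difference `d k = x₁ k - x₂ k` of the two walks grows by at most `η (δt + √δt)` per
step, since the two walks are driven by the same signs `ε`. After at most `n` steps of size
`δt = 1/n` this gives `|d k| ≤ η (1 + k/n + k/√n) ≤ 3 η √n`, infinitesimal together with `η √n`. -/

open Filter

namespace Hyperreal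

theorem infinitesimal_ofSeq_of_eventually_abs_le {f g : ℕ → ℝ} (C : ℝ)
    (hf : Infinitesimal (ofSeq f)) (hgf : ∀ᶠ n in hyperfilter ℕ, |g n| ≤ C * f n) :
    Infinitesimal (ofSeq g) := by
  rw [Infinitesimal, isSt_ofSeq_iff_tendsto] at hf ⊢
  refine squeeze_zero_norm' hgf ?_
  simpa using hf.const_mul C

end Hyperreal

theorem le_add_mul_of_forall_lt_le_add {u : ℕ → ℝ} {c : ℝ} {n : ℕ}
    (hu : ∀ k < n, u (k + 1) ≤ u k + c) : ∀ k ≤ n, u k ≤ u 0 + k * c := by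
  intro k hk
  induction k with
  | zero => simp
  | succ k ih =>
    push_cast
    linarith [hu k hk, ih (Nat.le_of_succ_le hk)]

theorem abs_sub_walk_step_le {x₁ x₂ b₁ b₂ σ₁ σ₂ e h s η : ℝ} (he : |e| ≤ 1) (hh : 0 ≤ h)
    (hs : 0 ≤ s) (hb : |b₁ - b₂| ≤ η) (hσ : |σ₁ - σ₂| ≤ η) :
    |(x₁ + b₁ * h + σ₁ * e * s) - (x₂ + b₂ * h + σ₂ * e * s)| ≤ |x₁ - x₂| + η * (h + s) := by
  have hdrift : |(b₁ - b₂) * h| ≤ η * h := by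
    rw [abs_mul, abs_of_nonneg hh]
    exact mul_le_mul_of_nonneg_right hb hh
  have hnoise : |(σ₁ - σ₂) * e * s| ≤ η * s := by
    rw [abs_mul, abs_mul, abs_of_nonneg hs]
    exact mul_le_mul_of_nonneg_right
      ((mul_le_of_le_one_right (abs_nonneg _) he).trans hσ) hs
  calc |(x₁ + b₁ * h + σ₁ * e * s) - (x₂ + b₂ * h + σ₂ * e * s)|
      = |(x₁ - x₂) + (b₁ - b₂) * h + (σ₁ - σ₂) * e * s| := by ring_nf
    _ ≤ |x₁ - x₂| + |(b₁ - b₂) * h| + |(σ₁ - σ₂) * e * s| := abs_add_three _ _ _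
    _ ≤ |x₁ - x₂| + η * (h + s) := by linarith

theorem abs_sub_walk_le {n : ℕ} {h s η : ℝ} {ε b₁ b₂ σ₁ σ₂ x₁ x₂ : ℕ → ℝ} (hh : 0 ≤ h)
    (hs : 0 ≤ s) (hε : ∀ k < n, |ε k| ≤ 1)
    (hx₁ : ∀ k < n, x₁ (k + 1) = x₁ k + b₁ k * h + σ₁ k * ε k * s)
    (hx₂ : ∀ k < n, x₂ (k + 1) = x₂ k + b₂ k * h + σ₂ k * ε k * s)
    (hb : ∀ k < n, |b₁ k - b₂ k| ≤ η) (hσ : ∀ k < n, |σ₁ k - σ₂ k| ≤ η) :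
    ∀ k ≤ n, |x₁ k - x₂ k| ≤ |x₁ 0 - x₂ 0| + k * (η * (h + s)) :=
  le_add_mul_of_forall_lt_le_add fun k hk => by
    rw [hx₁ k hk, hx₂ k hk]
    exact abs_sub_walk_step_le (hε k hk) hh hs (hb k hk) (hσ k hk)

theorem one_add_mul_inv_add_sqrt_inv_le {n k : ℕ} (hn : 1 ≤ n) (hk : k ≤ n) :
    1 + k * (1 / n + √(1 / n)) ≤ 3 * √n := by
  have hn' : (1 : ℝ) ≤ n := by exact_mod_cast hn
  have hk' : (k : ℝ) ≤ n := by exact_mod_cast hk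
  have hsqrt : 1 ≤ √n := Real.one_le_sqrt.mpr hn'
  have hdrift : k * (1 / n : ℝ) ≤ 1 := by
    rw [mul_one_div, div_le_one (by positivity)]
    exact hk'
  have hnoise : k * √(1 / n : ℝ) ≤ √n := by
    rw [one_div, Real.sqrt_inv, ← div_eq_mul_inv, div_le_iff₀ (by positivity),
      Real.mul_self_sqrt (by positivity)]
    exact hk'
  linarith

theorem sup'_abs_sub_walk_le {n : ℕ} (hn : 1 ≤ n) {η : ℝ} {ε b₁ b₂ σ₁ σ₂ x₁ x₂ : ℕ → ℝ}
    (hε : ∀ k < n, |ε k| ≤ 1)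
    (hx₁ : ∀ k < n, x₁ (k + 1) = x₁ k + b₁ k * (1 / n) + σ₁ k * ε k * √(1 / n))
    (hx₂ : ∀ k < n, x₂ (k + 1) = x₂ k + b₂ k * (1 / n) + σ₂ k * ε k * √(1 / n))
    (h0 : |x₁ 0 - x₂ 0| ≤ η) (hb : ∀ k < n, |b₁ k - b₂ k| ≤ η)
    (hσ : ∀ k < n, |σ₁ k - σ₂ k| ≤ η) :
    (Finset.range (n + 1)).sup' Finset.nonempty_range_add_one (fun k => |x₁ k - x₂ k|)
      ≤ 3 * (η * √n) := by
  have hη : 0 ≤ η := (abs_nonneg _).trans h0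
  refine Finset.sup'_le _ _ fun k hk => ?_
  have hkn : k ≤ n := Nat.lt_succ_iff.mp (Finset.mem_range.mp hk)
  calc |x₁ k - x₂ k| ≤ |x₁ 0 - x₂ 0| + k * (η * (1 / n + √(1 / n))) :=
        abs_sub_walk_le (by positivity) (Real.sqrt_nonneg _) hε hx₁ hx₂ hb hσ k hkn
    _ ≤ η * (1 + k * (1 / n + √(1 / n))) := by linarith
    _ ≤ η * (3 * √n) :=
        mul_le_mul_of_nonneg_left (one_add_mul_inv_add_sqrt_inv_le hn hkn) hη
    _ = 3 * (η * √n) := by ring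

theorem stmt_1_general (ε b₁ b₂ σ₁ σ₂ x₁ x₂ : ℕ → ℕ → ℝ) (η : ℕ → ℝ) (D : ℕ → ℝ)
    (hε : ∀ n, 1 ≤ n → ∀ k < n, ε n k = 1 ∨ ε n k = -1)
    (hx₁ : ∀ n, 1 ≤ n → ∀ k < n,
      x₁ n (k + 1) = x₁ n k + b₁ n k * (1 / n) + σ₁ n k * ε n k * Real.sqrt (1 / n))
    (hx₂ : ∀ n, 1 ≤ n → ∀ k < n,
      x₂ n (k + 1) = x₂ n k + b₂ n k * (1 / n) + σ₂ n k * ε n k * Real.sqrt (1 / n))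
    (h0 : ∀ n, 1 ≤ n → |x₁ n 0 - x₂ n 0| ≤ η n)
    (hb : ∀ n, 1 ≤ n → ∀ k < n, |b₁ n k - b₂ n k| ≤ η n)
    (hσ : ∀ n, 1 ≤ n → ∀ k < n, |σ₁ n k - σ₂ n k| ≤ η n)
    (hD : ∀ n, D n = (Finset.range (n + 1)).sup' Finset.nonempty_range_add_one
      (fun k => |x₁ n k - x₂ n k|))
    (hinf : Hyperreal.Infinitesimal
      (Hyperreal.ofSeq fun n => η n * Real.sqrt n)) :
    Hyperreal.Infinitesimal (Hyperreal.ofSeq D) := by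
  refine Hyperreal.infinitesimal_ofSeq_of_eventually_abs_le 3 hinf ?_
  filter_upwards [Nat.hyperfilter_le_atTop (eventually_ge_atTop 1)] with n hn
  have hε' : ∀ k < n, |ε n k| ≤ 1 := fun k hk => by
    rcases hε n hn k hk with h | h <;> simp [h]
  rw [hD n, abs_of_nonneg ((abs_nonneg _).trans
    (Finset.le_sup' (fun k => |x₁ n k - x₂ n k|) (Finset.mem_range.mpr n.succ_pos)))]
  exact sup'_abs_sub_walk_le hn hε' (hx₁ n hn) (hx₂ n hn) (h0 n hn) (hb n hn) (hσ n hn)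

/-- Nonstandard form of the paper's Lemma, with hyperreals realized as germs of
real sequences along the hyperfilter on ℕ: if the discrepancy `η(n)` between
the data of two random walks on the time scale of step `1/n` is such that
`η(n)·√n` determines an infinitesimal hyperreal, then the maximal deviation
`D(n)` between the two walks also determines an infinitesimal hyperreal. -/
theorem stmt_1 (ε b₁ b₂ σ₁ σ₂ x₁ x₂ : ℕ → ℕ → ℝ) (η : ℕ → ℝ) (D : ℕ → ℝ)
    (hη : ∀ n, 0 ≤ η n)
    (hε : ∀ n, 1 ≤ n → ∀ k < n, ε n k = 1 ∨ ε n k = -1)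
    (hx₁ : ∀ n, 1 ≤ n → ∀ k < n,
      x₁ n (k + 1) = x₁ n k + b₁ n k * (1 / n) + σ₁ n k * ε n k * Real.sqrt (1 / n))
    (hx₂ : ∀ n, 1 ≤ n → ∀ k < n,
      x₂ n (k + 1) = x₂ n k + b₂ n k * (1 / n) + σ₂ n k * ε n k * Real.sqrt (1 / n))
    (h0 : ∀ n, 1 ≤ n → |x₁ n 0 - x₂ n 0| ≤ η n)
    (hb : ∀ n, 1 ≤ n → ∀ k < n, |b₁ n k - b₂ n k| ≤ η n)
    (hσ : ∀ n, 1 ≤ n → ∀ k < n, |σ₁ n k - σ₂ n k| ≤ η n)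
    (hD : ∀ n, D n = (Finset.range (n + 1)).sup' Finset.nonempty_range_add_one
      (fun k => |x₁ n k - x₂ n k|))
    (hinf : Hyperreal.Infinitesimal
      (Hyperreal.ofSeq fun n => η n * Real.sqrt n)) :
    Hyperreal.Infinitesimal (Hyperreal.ofSeq D) :=
  stmt_1_general ε b₁ b₂ σ₁ σ₂ x₁ x₂ η D hε hx₁ hx₂ h0 hb hσ hD hinf
end
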